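/- arXiv:1403.3079 — 2 statements merged into one kernel-verified Lean document; each statement's English description precedes it below -/
import Mathlib

section
/- Let G be a simple graph on a vertex set V and let M be the doubled graph of G on V × Bool. Suppose u₁, u₂, u₃ ∈ V are distinct vertices with u₁ adjacent to u₂, u₁ adjacent to u₃, and u₂ not adjacent to u₃ in G, and suppose v₁, v₂, v₃ ∈ V are distinct and pairwise adjacent in G. Then the induced subgraph of M on {u₁, u₂, u₃} × Bool is not isomorphic to the induced subgraph of M on {v₁, v₂, v₃} × Bool. -/
/-- The doubled graph of a simple graph `G` on `V`: its vertex set is `V × Bool`, and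
`(a, i)` is adjacent to `(b, j)` iff either `i = j` and `a` is adjacent to `b` in `G`,
or `i ≠ j` and `a` is not adjacent to `b` in `G`. -/
def doubled {V : Type*} (G : SimpleGraph V) : SimpleGraph (V × Bool) where
  Adj u v := (u.2 = v.2 ∧ G.Adj u.1 v.1) ∨ (u.2 ≠ v.2 ∧ ¬ G.Adj u.1 v.1)
  symm := by
    constructor
    intro u v h
    rcases h with ⟨h1, h2⟩ | ⟨h1, h2⟩
    · exact Or.inl ⟨h1.symm, h2.symm⟩
    · exact Or.inr ⟨h1.symm, fun h => h2 h.symm⟩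
  loopless := by
    constructor
    intro u h
    rcases h with ⟨_, h2⟩ | ⟨h1, _⟩
    · exact G.loopless.irrefl _ h2
    · exact h1 rfl

/-- For a vertex `u = (a, i)` of the doubled graph, `prime u` is the vertex `(a, ¬i)`. -/
def prime {V : Type*} (u : V × Bool) : V × Bool := (u.1, !u.2)

/-- A simple graph `G` on `V` has the extension property if for all finite disjoint sets
`A, B ⊆ V` there is a vertex `c ∉ A ∪ B` adjacent to every vertex of `A` and to no vertex
of `B`. -/
def ExtensionProperty {V : Type*} (G : SimpleGraph V) : Prop :=
  ∀ A B : Finset V, Disjoint A B →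
    ∃ c, c ∉ A ∧ c ∉ B ∧ (∀ a ∈ A, G.Adj c a) ∧ ∀ b ∈ B, ¬ G.Adj c b

/-!
Over the path `u₂ - u₁ - u₃`, which is complete bipartite with sides `{u₁}` and `{u₂, u₃}`, the
doubled graph is 2-colourable, whereas over a triangle it contains a triangle in each layer.
2-colourability is invariant under isomorphism.
-/

open SimpleGraph Set

namespace doubled

variable {V : Type*} {G : SimpleGraph V} {S : Set V}

/-- Colour `(a, i)` by `i xor c a`: an edge inside a layer joins the two sides of `c`, an edge
between the layers stays on one side. -/
lemma colorable_two_induce_of_adj_iff_ne (c : V → Bool)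
    (hc : ∀ a ∈ S, ∀ b ∈ S, G.Adj a b ↔ c a ≠ c b) :
    ((doubled G).induce (S ×ˢ univ)).Colorable 2 := by
  refine (Coloring.mk (fun x => x.1.2 ^^ c x.1.1) fun {x y} hxy => ?_).colorable
  have := hc _ x.2.1 _ y.2.1
  rcases hxy with h | h <;> simp_all

lemma not_colorable_two_induce_of_adj {a b c : V} (ha : a ∈ S) (hb : b ∈ S) (hc : c ∈ S)
    (hab : G.Adj a b) (hac : G.Adj a c) (hbc : G.Adj b c) :
    ¬((doubled G).induce (S ×ˢ univ)).Colorable 2 := by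
  classical
  intro hcol
  refine hcol.cliqueFree (by norm_num) {⟨(a, false), ha, trivial⟩, ⟨(b, false), hb, trivial⟩,
    ⟨(c, false), hc, trivial⟩} (is3Clique_triple_iff.2 ?_)
  exact ⟨.inl ⟨rfl, hab⟩, .inl ⟨rfl, hac⟩, .inl ⟨rfl, hbc⟩⟩

end doubled

theorem statement12_general {V : Type*} (G : SimpleGraph V) (u₁ u₂ u₃ v₁ v₂ v₃ : V)
    (au12 : G.Adj u₁ u₂) (au13 : G.Adj u₁ u₃) (au23 : ¬ G.Adj u₂ u₃)
    (av12 : G.Adj v₁ v₂) (av13 : G.Adj v₁ v₃) (av23 : G.Adj v₂ v₃) :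
    IsEmpty
      ((doubled G).induce (({u₁, u₂, u₃} : Set V) ×ˢ (Set.univ : Set Bool)) ≃g
        (doubled G).induce (({v₁, v₂, v₃} : Set V) ×ˢ (Set.univ : Set Bool))) := by
  classical
  refine ⟨fun e => doubled.not_colorable_two_induce_of_adj (by simp) (by simp) (by simp)
    av12 av13 av23 (Colorable.of_hom e.symm.toHom ?_)⟩
  refine doubled.colorable_two_induce_of_adj_iff_ne (fun x => decide (x = u₁)) ?_
  have h12 := G.ne_of_adj au12
  have h13 := G.ne_of_adj au13
  simp only [mem_insert_iff, mem_singleton_iff]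
  rintro a (rfl | rfl | rfl) b (rfl | rfl | rfl) <;>
    simp_all [G.adj_comm, h12.symm, h13.symm]

/-- If `u₁, u₂, u₃` are distinct vertices of `G` with `u₁ ~ u₂`, `u₁ ~ u₃` and `u₂ ≁ u₃`,
and `v₁, v₂, v₃` are distinct pairwise adjacent vertices of `G`, then the induced subgraphs
of the doubled graph `M` on `{u₁, u₂, u₃} × Bool` and on `{v₁, v₂, v₃} × Bool` are not
isomorphic. -/
theorem statement12 {V : Type*} (G : SimpleGraph V) (u₁ u₂ u₃ v₁ v₂ v₃ : V)
    (hu12 : u₁ ≠ u₂) (hu13 : u₁ ≠ u₃) (hu23 : u₂ ≠ u₃)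
    (hv12 : v₁ ≠ v₂) (hv13 : v₁ ≠ v₃) (hv23 : v₂ ≠ v₃)
    (au12 : G.Adj u₁ u₂) (au13 : G.Adj u₁ u₃) (au23 : ¬ G.Adj u₂ u₃)
    (av12 : G.Adj v₁ v₂) (av13 : G.Adj v₁ v₃) (av23 : G.Adj v₂ v₃) :
    IsEmpty
      ((doubled G).induce (({u₁, u₂, u₃} : Set V) ×ˢ (Set.univ : Set Bool)) ≃g
        (doubled G).induce (({v₁, v₂, v₃} : Set V) ×ˢ (Set.univ : Set Bool))) :=
  statement12_general G u₁ u₂ u₃ v₁ v₂ v₃ au12 au13 au23 av12 av13 av23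
end

section
/- Let G be a simple graph on a vertex set V and let M be the doubled graph of G on V × Bool. Suppose u₁, u₂, u₃ ∈ V are distinct vertices with u₁ adjacent to u₂, u₁ adjacent to u₃, and u₂ not adjacent to u₃ in G, and suppose v₁, v₂, v₃ ∈ V are distinct and pairwise adjacent in G. Then there is no automorphism σ of M such that σ maps {uᵢ} × Bool onto {vᵢ} × Bool for each i = 1, 2, 3. (Together with the transitivity of Aut(M) on pairs of distinct classes when G has the extension property, this shows that the type of a triple of classes of the equivalence relation identifying (a,0) with (a,1) is not determined by the types of its sub-pairs.) -/
/-!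
Writing `σ (a, false) = (a', s a)`, preservation of adjacency in the doubled graph says
`G.Adj a b ↔ (s a = s b ↔ G.Adj a' b')`. Around a triple the bits `s` cancel, so the parity
of the number of edges of `G` among three classes is invariant under any automorphism
mapping classes to classes (the switching class of `G` is preserved). The triple `u` spans two
edges and the triple `v` three.
-/

lemma fst_eq_of_image_prod_subset {α β γ δ : Type*} {f : α × β → γ × δ} {a : α} {c : γ}
    (h : f '' ({a} ×ˢ Set.univ) ⊆ {c} ×ˢ Set.univ) (i : β) : (f (a, i)).1 = c :=
  (h ⟨(a, i), ⟨rfl, trivial⟩, rfl⟩).1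

section Doubled

variable {V : Type*} {G : SimpleGraph V}

lemma doubled_adj_mk_iff {a b : V} {i j : Bool} :
    (doubled G).Adj (a, i) (b, j) ↔ (i = j ↔ G.Adj a b) := by
  change (i = j ∧ G.Adj a b) ∨ (i ≠ j ∧ ¬ G.Adj a b) ↔ _
  tauto

lemma doubled_adj_iff_of_fst_map (σ : doubled G ≃g doubled G) {a b a' b' : V} {i j : Bool}
    (ha : (σ (a, i)).1 = a') (hb : (σ (b, j)).1 = b') :
    (i = j ↔ G.Adj a b) ↔ ((σ (a, i)).2 = (σ (b, j)).2 ↔ G.Adj a' b') := by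
  rw [← doubled_adj_mk_iff, ← σ.map_adj_iff, ← ha, ← hb, ← doubled_adj_mk_iff]

theorem doubled_adj_parity_eq_of_fst_map (σ : doubled G ≃g doubled G) {a₁ a₂ a₃ b₁ b₂ b₃ : V}
    (h₁ : (σ (a₁, false)).1 = b₁) (h₂ : (σ (a₂, false)).1 = b₂)
    (h₃ : (σ (a₃, false)).1 = b₃) :
    (G.Adj a₁ a₂ ↔ (G.Adj a₁ a₃ ↔ G.Adj a₂ a₃)) ↔
      (G.Adj b₁ b₂ ↔ (G.Adj b₁ b₃ ↔ G.Adj b₂ b₃)) := by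
  have h₁₂ := doubled_adj_iff_of_fst_map σ h₁ h₂
  have h₁₃ := doubled_adj_iff_of_fst_map σ h₁ h₃
  have h₂₃ := doubled_adj_iff_of_fst_map σ h₂ h₃
  simp only [true_iff] at h₁₂ h₁₃ h₂₃
  rw [h₁₂, h₁₃, h₂₃]
  clear h₁₂ h₁₃ h₂₃
  generalize (σ (a₁, false)).2 = s₁, (σ (a₂, false)).2 = s₂, (σ (a₃, false)).2 = s₃
  cases s₁ <;> cases s₂ <;> cases s₃ <;> simp <;> tauto

end Doubled

theorem statement13_general {V : Type*} (G : SimpleGraph V) (u₁ u₂ u₃ v₁ v₂ v₃ : V)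
    (au12 : G.Adj u₁ u₂) (au13 : G.Adj u₁ u₃) (au23 : ¬ G.Adj u₂ u₃)
    (av12 : G.Adj v₁ v₂) (av13 : G.Adj v₁ v₃) (av23 : G.Adj v₂ v₃) :
    ¬ ∃ σ : (doubled G) ≃g (doubled G),
        (fun u => σ u) '' (({u₁} : Set V) ×ˢ (Set.univ : Set Bool)) =
          ({v₁} : Set V) ×ˢ (Set.univ : Set Bool) ∧
        (fun u => σ u) '' (({u₂} : Set V) ×ˢ (Set.univ : Set Bool)) =
          ({v₂} : Set V) ×ˢ (Set.univ : Set Bool) ∧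
        (fun u => σ u) '' (({u₃} : Set V) ×ˢ (Set.univ : Set Bool)) =
          ({v₃} : Set V) ×ˢ (Set.univ : Set Bool) := by
  rintro ⟨σ, h₁, h₂, h₃⟩
  have parity := doubled_adj_parity_eq_of_fst_map σ (fst_eq_of_image_prod_subset h₁.le false)
    (fst_eq_of_image_prod_subset h₂.le false) (fst_eq_of_image_prod_subset h₃.le false)
  simp [au12, au13, au23, av12, av13, av23] at parity

/-- If `u₁, u₂, u₃` are distinct vertices of `G` with `u₁ ~ u₂`, `u₁ ~ u₃` and `u₂ ≁ u₃`,
and `v₁, v₂, v₃` are distinct pairwise adjacent vertices of `G`, then no automorphism of the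
doubled graph `M` maps `{uᵢ} × Bool` onto `{vᵢ} × Bool` for each `i = 1, 2, 3`. -/
theorem statement13 {V : Type*} (G : SimpleGraph V) (u₁ u₂ u₃ v₁ v₂ v₃ : V)
    (hu12 : u₁ ≠ u₂) (hu13 : u₁ ≠ u₃) (hu23 : u₂ ≠ u₃)
    (hv12 : v₁ ≠ v₂) (hv13 : v₁ ≠ v₃) (hv23 : v₂ ≠ v₃)
    (au12 : G.Adj u₁ u₂) (au13 : G.Adj u₁ u₃) (au23 : ¬ G.Adj u₂ u₃)
    (av12 : G.Adj v₁ v₂) (av13 : G.Adj v₁ v₃) (av23 : G.Adj v₂ v₃) :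
    ¬ ∃ σ : (doubled G) ≃g (doubled G),
        (fun u => σ u) '' (({u₁} : Set V) ×ˢ (Set.univ : Set Bool)) =
          ({v₁} : Set V) ×ˢ (Set.univ : Set Bool) ∧
        (fun u => σ u) '' (({u₂} : Set V) ×ˢ (Set.univ : Set Bool)) =
          ({v₂} : Set V) ×ˢ (Set.univ : Set Bool) ∧
        (fun u => σ u) '' (({u₃} : Set V) ×ˢ (Set.univ : Set Bool)) =
          ({v₃} : Set V) ×ˢ (Set.univ : Set Bool) :=
  statement13_general G u₁ u₂ u₃ v₁ v₂ v₃ au12 au13 au23 av12 av13 av23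
end
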